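/- Under the hypotheses of Propositions 2 and 3 (Jordan decomposition of μ_{X|1} - μ_{X|2} into μ⁺, μ⁻ with the non-atomicity Assumption), the predictor f_{Q*} with Q* = (F₊⁻¹ + F₋⁻¹)/2 satisfies the Equality of Group-Wise Risks: E[(f*(X) - f_{Q*}(X))² | S=1] = E[(f*(X) - f_{Q*}(X))² | S=2]; equivalently ∫(f* - f_{Q*})² dμ_{X|1} = ∫(f* - f_{Q*})² dμ_{X|2}. -/

import Mathlib

open MeasureTheory Classical

/-- Pushforward under `g` of the normalization of `μ` to a probability measure. -/
noncomputable def normPush {α : Type*} [MeasurableSpace α]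
    (μ : Measure α) (g : α → ℝ) : Measure ℝ :=
  ((μ Set.univ)⁻¹ • μ).map g

/-- Cumulative distribution function of a measure on `ℝ` (as a real number). -/
noncomputable def cdfR (ν : Measure ℝ) (t : ℝ) : ℝ := (ν (Set.Iic t)).toReal

/-- Quantile (generalized inverse CDF) function of a measure on `ℝ`. -/
noncomputable def quantileFn (ν : Measure ℝ) (u : ℝ) : ℝ := sInf {t : ℝ | u ≤ cdfR ν t}

/-- The predictor `f_{Q*}` of rule (⁎) with `Q* = (F₊⁻¹ + F₋⁻¹)/2`, where `F₊, F₋` are the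
CDFs of the pushforwards by `fstar` of the normalized measures `μp, μm`, and `Ap, Am` are the
supports of `μp, μm`. -/
noncomputable def fQstar {α : Type*} [MeasurableSpace α] (μp μm : Measure α)
    (Ap Am : Set α) (fstar : α → ℝ) (x : α) : ℝ :=
  if x ∈ Ap then
    (quantileFn (normPush μp fstar) (cdfR (normPush μp fstar) (fstar x)) +
      quantileFn (normPush μm fstar) (cdfR (normPush μp fstar) (fstar x))) / 2
  else if x ∈ Am then
    (quantileFn (normPush μp fstar) (cdfR (normPush μm fstar) (fstar x)) +
      quantileFn (normPush μm fstar) (cdfR (normPush μm fstar) (fstar x))) / 2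
  else fstar x

open Set Filter Topology ProbabilityTheory

namespace FairAux

variable (ν : Measure ℝ) [IsProbabilityMeasure ν]

lemma cdfR_eq_cdf : cdfR ν = ⇑(cdf ν) := funext fun t => (cdf_eq_real ν t).symm

lemma cdfR_nonneg (t : ℝ) : 0 ≤ cdfR ν t := ENNReal.toReal_nonneg

lemma cdfR_le_one (t : ℝ) : cdfR ν t ≤ 1 := by
  rw [cdfR_eq_cdf]; exact cdf_le_one ν t

lemma cdfR_mono : Monotone (cdfR ν) := by
  rw [cdfR_eq_cdf]; exact monotone_cdf ν

lemma cdfR_tendsto_atTop : Tendsto (cdfR ν) atTop (𝓝 1) := by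
  rw [cdfR_eq_cdf]; exact tendsto_cdf_atTop ν

lemma cdfR_tendsto_atBot : Tendsto (cdfR ν) atBot (𝓝 0) := by
  rw [cdfR_eq_cdf]; exact tendsto_cdf_atBot ν

lemma measure_Iic_cdfR (t : ℝ) : ν (Iic t) = ENNReal.ofReal (cdfR ν t) := by
  rw [cdfR_eq_cdf, ofReal_cdf]

variable {ν} (hna : ∀ t : ℝ, ν {t} = 0)
include hna

lemma cdfR_continuous : Continuous (cdfR ν) := by
  rw [cdfR_eq_cdf]
  refine continuous_iff_continuousAt.2 fun x => ?_
  rw [(monotone_cdf ν).continuousAt_iff_leftLim_eq_rightLim]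
  have hr : Function.rightLim (⇑(cdf ν)) x = cdf ν x := by
    refine rightLim_eq_of_tendsto ?_
    exact ((cdf ν).right_continuous x).tendsto.mono_left (nhdsWithin_mono x Ioi_subset_Ici_self)
  have hl : Function.leftLim (⇑(cdf ν)) x = cdf ν x := by
    have hm := (cdf ν).measure_singleton x
    rw [measure_cdf, hna x] at hm
    have h1 : cdf ν x - Function.leftLim (⇑(cdf ν)) x ≤ 0 :=
      ENNReal.ofReal_eq_zero.1 hm.symm
    have h2 : Function.leftLim (⇑(cdf ν)) x ≤ cdf ν x := (monotone_cdf ν).leftLim_le le_rfl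
    linarith
  rw [hl, hr]

lemma cdfR_measurable : Measurable (cdfR ν) := (cdfR_continuous hna).measurable

/-- The pushforward of `ν` by its own cdf is uniform on `[0,1]`. -/
lemma map_cdfR : ν.map (cdfR ν) = volume.restrict (Icc (0:ℝ) 1) := by
  have hFc := cdfR_continuous hna
  have hFm := hFc.measurable
  haveI : IsFiniteMeasure (volume.restrict (Icc (0:ℝ) 1)) := by
    constructor
    rw [Measure.restrict_apply_univ, Real.volume_Icc]
    exact ENNReal.ofReal_lt_top
  haveI : IsFiniteMeasure (ν.map (cdfR ν)) := by
    constructor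
    rw [Measure.map_apply hFm MeasurableSet.univ]
    simp
  refine Measure.ext_of_Iic _ _ fun u => ?_
  rw [Measure.map_apply hFm measurableSet_Iic,
    Measure.restrict_apply measurableSet_Iic]
  have hint : Iic u ∩ Icc (0:ℝ) 1 = Icc 0 (min u 1) := by
    ext t
    simp only [mem_inter_iff, mem_Iic, mem_Icc, le_min_iff]
    tauto
  rw [hint, Real.volume_Icc]
  have hrhs : ENNReal.ofReal (min u 1 - 0) = ENNReal.ofReal (min u 1) := by norm_num
  rw [hrhs]
  rcases lt_or_ge u 0 with hu0 | hu0
  · have hempty : cdfR ν ⁻¹' Iic u = ∅ := by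
      ext t
      simp only [mem_preimage, mem_Iic, mem_empty_iff_false, iff_false, not_le]
      exact lt_of_lt_of_le hu0 (cdfR_nonneg ν t)
    rw [hempty, measure_empty, Eq.comm, ENNReal.ofReal_eq_zero]
    exact min_le_of_left_le hu0.le
  rcases le_or_gt 1 u with hu1 | hu1
  · have huniv : cdfR ν ⁻¹' Iic u = univ := by
      ext t
      simp only [mem_preimage, mem_Iic, mem_univ, iff_true]
      exact (cdfR_le_one ν t).trans hu1
    rw [huniv, measure_univ, min_eq_right hu1, ENNReal.ofReal_one]
  · -- 0 ≤ u < 1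
    rw [min_eq_left hu1.le]
    set T : Set ℝ := cdfR ν ⁻¹' Iic u with hT
    have hTclosed : IsClosed T := IsClosed.preimage hFc isClosed_Iic
    rcases eq_empty_or_nonempty T with hTe | hTne
    · -- T empty: then u < cdfR everywhere, forcing u ≤ 0, so u = 0
      have h0 : ∀ t, u < cdfR ν t := by
        intro t
        by_contra h
        push_neg at h
        exact (eq_empty_iff_forall_notMem.1 hTe) t h
      have : u ≤ 0 := by
        refine ge_of_tendsto (cdfR_tendsto_atBot ν) ?_
        exact Eventually.of_forall fun t => (h0 t).le
      have hu : u = 0 := le_antisymm this hu0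
      rw [hTe, measure_empty, hu, ENNReal.ofReal_zero]
    · have hTbdd : BddAbove T := by
        by_contra hbd
        have hall : ∀ t, cdfR ν t ≤ u := by
          intro t
          rcases not_bddAbove_iff.1 hbd t with ⟨s, hsT, hts⟩
          exact (cdfR_mono ν hts.le).trans hsT
        have : (1:ℝ) ≤ u := le_of_tendsto (cdfR_tendsto_atTop ν) (Eventually.of_forall hall)
        linarith
      set c := sSup T with hc
      have hcT : c ∈ T := hTclosed.csSup_mem hTne hTbdd
      have hTIic : T = Iic c := by
        apply Subset.antisymm
        · exact fun t ht => le_csSup hTbdd ht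
        · intro t ht
          exact (mem_preimage.2 ((cdfR_mono ν ht).trans hcT))
      have hFcu : cdfR ν c = u := by
        refine le_antisymm hcT ?_
        have htend : Tendsto (cdfR ν) (𝓝[>] c) (𝓝 (cdfR ν c)) :=
          (hFc.tendsto c).mono_left nhdsWithin_le_nhds
        refine ge_of_tendsto htend ?_
        filter_upwards [self_mem_nhdsWithin] with s hs
        by_contra h
        push_neg at h
        have : s ∈ T := mem_preimage.2 h.le
        exact absurd (le_csSup hTbdd this) (not_le.2 hs)
      rw [hTIic, measure_Iic_cdfR, hFcu]

end FairAux

namespace Quant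

variable (ν : Measure ℝ) [IsProbabilityMeasure ν]
open FairAux

lemma S_nonempty {u : ℝ} (hu : u < 1) : {t : ℝ | u ≤ cdfR ν t}.Nonempty := by
  have : ∀ᶠ t in atTop, u < cdfR ν t :=
    (cdfR_tendsto_atTop ν).eventually (eventually_gt_nhds hu)
  rcases this.exists with ⟨t, ht⟩
  exact ⟨t, ht.le⟩

lemma S_bddBelow {u : ℝ} (hu : 0 < u) : BddBelow {t : ℝ | u ≤ cdfR ν t} := by
  have : ∀ᶠ t in atBot, cdfR ν t < u :=
    (cdfR_tendsto_atBot ν).eventually (eventually_lt_nhds hu)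
  rcases this.exists with ⟨t₀, ht₀⟩
  refine ⟨t₀, fun s hs => ?_⟩
  by_contra h
  push_neg at h
  exact absurd ((cdfR_mono ν h.le).trans_lt ht₀) (not_lt.2 hs)

lemma quantile_monoOn : MonotoneOn (quantileFn ν) (Ioo (0:ℝ) 1) := by
  intro u hu v hv huv
  exact csInf_le_csInf (S_bddBelow ν hu.1) (S_nonempty ν hv.2)
    (fun t ht => le_trans huv ht)

lemma quantile_le {t : ℝ} (h : 0 < cdfR ν t) : quantileFn ν (cdfR ν t) ≤ t :=
  csInf_le (S_bddBelow ν h) (le_refl (cdfR ν t))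

variable {ν} (hna : ∀ s : ℝ, ν {s} = 0)
include hna

lemma quantile_mem {u : ℝ} (hu0 : 0 < u) (hu1 : u < 1) :
    u ≤ cdfR ν (quantileFn ν u) := by
  have hclosed : IsClosed {t : ℝ | u ≤ cdfR ν t} :=
    isClosed_le continuous_const (cdfR_continuous hna)
  exact hclosed.csInf_mem (S_nonempty ν hu1) (S_bddBelow ν hu0)

/-- a.e. `Q(F(t)) = t`. -/
lemma ae_quantile_cdfR : ∀ᵐ t ∂ν, quantileFn ν (cdfR ν t) = t := by
  have hFm := cdfR_measurable hna
  set F := cdfR ν with hF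
  -- the three bad sets
  set N₀ : Set ℝ := F ⁻¹' Iic 0 with hN₀
  set N₁ : Set ℝ := F ⁻¹' Ici 1 with hN₁
  set B : Set ℝ := ⋃ q : ℚ, {t : ℝ | (q:ℝ) < t ∧ F t ≤ F q} with hB
  have hmap := map_cdfR hna
  have hN₀0 : ν N₀ = 0 := by
    rw [hN₀, ← Measure.map_apply hFm measurableSet_Iic, hmap,
      Measure.restrict_apply measurableSet_Iic]
    have : Iic (0:ℝ) ∩ Icc 0 1 = {0} := by
      ext t
      simp only [mem_inter_iff, mem_Iic, mem_Icc, mem_singleton_iff]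
      constructor
      · rintro ⟨h1, h2, _⟩; linarith
      · rintro rfl; norm_num
    rw [this]
    exact Real.volume_singleton
  have hN₁0 : ν N₁ = 0 := by
    rw [hN₁, ← Measure.map_apply hFm measurableSet_Ici, hmap,
      Measure.restrict_apply measurableSet_Ici]
    have : Ici (1:ℝ) ∩ Icc 0 1 = {1} := by
      ext t
      simp only [mem_inter_iff, mem_Ici, mem_Icc, mem_singleton_iff]
      constructor
      · rintro ⟨h1, _, h2⟩; linarith
      · rintro rfl; norm_num
    rw [this]
    exact Real.volume_singleton
  have hB0 : ν B = 0 := by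
    rw [hB]
    refine measure_iUnion_null fun q => ?_
    have hsub : {t : ℝ | (q:ℝ) < t ∧ F t ≤ F q} ⊆ (F ⁻¹' Iic (F q)) \ Iic (q:ℝ) := by
      intro t ht
      exact ⟨ht.2, not_le.2 ht.1⟩
    refine measure_mono_null hsub ?_
    have hsub2 : Iic (q:ℝ) ⊆ F ⁻¹' Iic (F q) := fun t ht => cdfR_mono ν ht
    rw [measure_diff hsub2 measurableSet_Iic.nullMeasurableSet (measure_ne_top ν _)]
    have h1 : ν (F ⁻¹' Iic (F q)) = ENNReal.ofReal (F q) := by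
      rw [← Measure.map_apply hFm measurableSet_Iic, hmap,
        Measure.restrict_apply measurableSet_Iic]
      have : Iic (F q) ∩ Icc (0:ℝ) 1 = Icc 0 (min (F q) 1) := by
        ext t
        simp only [mem_inter_iff, mem_Iic, mem_Icc, le_min_iff]
        tauto
      rw [this, Real.volume_Icc, min_eq_left (cdfR_le_one ν q), sub_zero]
    rw [h1, measure_Iic_cdfR, tsub_self]
  have hsub : {t : ℝ | quantileFn ν (F t) ≠ t} ⊆ N₀ ∪ N₁ ∪ B := by
    intro t ht
    by_contra hmem
    simp only [mem_union, not_or] at hmem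
    obtain ⟨⟨h0, h1⟩, hb⟩ := hmem
    have hF0 : 0 < F t := lt_of_not_ge fun h => h0 h
    have hF1 : F t < 1 := lt_of_not_ge fun h => h1 h
    have hle : quantileFn ν (F t) ≤ t := quantile_le ν hF0
    have hlt : quantileFn ν (F t) < t := lt_of_le_of_ne hle ht
    set a := quantileFn ν (F t) with ha
    have haF : F t ≤ F a := quantile_mem hna hF0 hF1
    rcases exists_rat_btwn hlt with ⟨q, hq1, hq2⟩
    apply hb
    rw [hB]
    refine mem_iUnion.2 ⟨q, hq2, ?_⟩
    exact le_trans haF (cdfR_mono ν hq1.le)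
  have : ν {t : ℝ | quantileFn ν (F t) ≠ t} = 0 :=
    measure_mono_null hsub
      (measure_union_null (measure_union_null hN₀0 hN₁0) hB0)
  exact this

end Quant

namespace Quant2

open FairAux Quant

variable (ν ν' : Measure ℝ) [IsProbabilityMeasure ν] [IsProbabilityMeasure ν']

lemma measurable_quantile_comp :
    Measurable fun t => quantileFn ν' (cdfR ν t) := by
  have hFm : Measurable (cdfR ν) := (cdfR_mono ν).measurable
  apply measurable_of_Iic
  intro a
  set S : Set ℝ := (fun t => quantileFn ν' (cdfR ν t)) ⁻¹' Iic a with hS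
  set Z₀ : Set ℝ := cdfR ν ⁻¹' Iic 0 with hZ₀
  set Z₁ : Set ℝ := cdfR ν ⁻¹' Ici 1 with hZ₁
  set V : Set ℝ := {t | 0 < cdfR ν t ∧ cdfR ν t < 1} with hV
  have hZ₀val : ∀ t ∈ Z₀, cdfR ν t = 0 := fun t ht => le_antisymm ht (cdfR_nonneg ν t)
  have hZ₁val : ∀ t ∈ Z₁, cdfR ν t = 1 := fun t ht => le_antisymm (cdfR_le_one ν t) ht
  have hcover : S = (Z₀ ∩ S) ∪ (V ∩ S) ∪ (Z₁ ∩ S) := by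
    ext t
    constructor
    · intro ht
      rcases le_or_gt (cdfR ν t) 0 with h0 | h0
      · exact Or.inl (Or.inl ⟨h0, ht⟩)
      rcases le_or_gt 1 (cdfR ν t) with h1 | h1
      · exact Or.inr ⟨h1, ht⟩
      · exact Or.inl (Or.inr ⟨⟨h0, h1⟩, ht⟩)
    · rintro ((⟨_, ht⟩ | ⟨_, ht⟩) | ⟨_, ht⟩) <;> exact ht
  have hZ₀S : MeasurableSet (Z₀ ∩ S) := by
    by_cases h : quantileFn ν' 0 ≤ a
    · have : Z₀ ∩ S = Z₀ := by
        refine inter_eq_left.2 fun t ht => ?_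
        simp only [hS, mem_preimage, mem_Iic]
        rw [hZ₀val t ht]
        exact h
      rw [this]; exact hFm measurableSet_Iic
    · have : Z₀ ∩ S = ∅ := by
        refine eq_empty_iff_forall_notMem.2 fun t ht => ?_
        apply h
        have := ht.2
        simp only [hS, mem_preimage, mem_Iic] at this
        rwa [hZ₀val t ht.1] at this
      rw [this]; exact MeasurableSet.empty
  have hZ₁S : MeasurableSet (Z₁ ∩ S) := by
    by_cases h : quantileFn ν' 1 ≤ a
    · have : Z₁ ∩ S = Z₁ := by
        refine inter_eq_left.2 fun t ht => ?_
        simp only [hS, mem_preimage, mem_Iic]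
        rw [hZ₁val t ht]
        exact h
      rw [this]; exact hFm measurableSet_Ici
    · have : Z₁ ∩ S = ∅ := by
        refine eq_empty_iff_forall_notMem.2 fun t ht => ?_
        apply h
        have := ht.2
        simp only [hS, mem_preimage, mem_Iic] at this
        rwa [hZ₁val t ht.1] at this
      rw [this]; exact MeasurableSet.empty
  have hVS : MeasurableSet (V ∩ S) := by
    refine Set.OrdConnected.measurableSet ⟨fun x hx z hz y hy => ?_⟩
    have hxy : cdfR ν x ≤ cdfR ν y := cdfR_mono ν hy.1
    have hyz : cdfR ν y ≤ cdfR ν z := cdfR_mono ν hy.2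
    have hyV : y ∈ V := ⟨lt_of_lt_of_le hx.1.1 hxy, lt_of_le_of_lt hyz hz.1.2⟩
    refine ⟨hyV, ?_⟩
    simp only [hS, mem_preimage, mem_Iic]
    have hq : quantileFn ν' (cdfR ν y) ≤ quantileFn ν' (cdfR ν z) :=
      quantile_monoOn ν' hyV hz.1 hyz
    have := hz.2
    simp only [hS, mem_preimage, mem_Iic] at this
    exact hq.trans this
  rw [hcover]
  exact (hZ₀S.union hVS).union hZ₁S

lemma aemeasurable_quantile_restrict :
    AEMeasurable (quantileFn ν') (volume.restrict (Icc (0:ℝ) 1)) := by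
  rw [← Measure.restrict_congr_set Ioo_ae_eq_Icc]
  exact aemeasurable_restrict_of_monotoneOn measurableSet_Ioo (quantile_monoOn ν')

variable {ν} (hna : ∀ s : ℝ, ν {s} = 0)
include hna

lemma sq_quantile_lintegral :
    ∫⁻ u in Icc (0:ℝ) 1, ENNReal.ofReal ((quantileFn ν u) ^ 2) ∂volume
      = ∫⁻ t, ENNReal.ofReal (t ^ 2) ∂ν := by
  have hmeas : AEMeasurable (fun u => ENNReal.ofReal ((quantileFn ν u) ^ 2))
      (ν.map (cdfR ν)) := by
    rw [map_cdfR hna]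
    exact ENNReal.measurable_ofReal.comp_aemeasurable
      ((aemeasurable_quantile_restrict ν).pow_const 2)
  rw [← map_cdfR hna, lintegral_map' hmeas (cdfR_measurable hna).aemeasurable]
  refine lintegral_congr_ae ?_
  filter_upwards [ae_quantile_cdfR hna] with t ht
  rw [ht]

lemma key_lintegral :
    ∫⁻ t, ENNReal.ofReal
        ((t - (quantileFn ν (cdfR ν t) + quantileFn ν' (cdfR ν t)) / 2) ^ 2) ∂ν
      = ∫⁻ u in Icc (0:ℝ) 1,
          ENNReal.ofReal (((quantileFn ν u - quantileFn ν' u) / 2) ^ 2) ∂volume := by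
  have h1 : (fun t => ENNReal.ofReal
        ((t - (quantileFn ν (cdfR ν t) + quantileFn ν' (cdfR ν t)) / 2) ^ 2))
      =ᵐ[ν] fun t =>
        ENNReal.ofReal (((quantileFn ν (cdfR ν t) - quantileFn ν' (cdfR ν t)) / 2) ^ 2) := by
    filter_upwards [ae_quantile_cdfR hna] with t ht
    rw [ht]
    congr 1
    ring
  rw [lintegral_congr_ae h1]
  have hmeas : AEMeasurable
      (fun u => ENNReal.ofReal (((quantileFn ν u - quantileFn ν' u) / 2) ^ 2))
      (ν.map (cdfR ν)) := by
    rw [map_cdfR hna]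
    exact ENNReal.measurable_ofReal.comp_aemeasurable
      ((((aemeasurable_quantile_restrict ν).sub
        (aemeasurable_quantile_restrict ν')).div_const 2).pow_const 2)
  rw [← lintegral_map' hmeas (cdfR_measurable hna).aemeasurable, map_cdfR hna]

lemma key_fin (hna' : ∀ s : ℝ, ν' {s} = 0)
    (hmom : Integrable (fun t : ℝ => t ^ 2) ν) (hmom' : Integrable (fun t : ℝ => t ^ 2) ν') :
    ∫⁻ u in Icc (0:ℝ) 1,
        ENNReal.ofReal (((quantileFn ν u - quantileFn ν' u) / 2) ^ 2) ∂volume < ⊤ := by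
  have hb : ∀ u : ℝ, ENNReal.ofReal (((quantileFn ν u - quantileFn ν' u) / 2) ^ 2)
      ≤ ENNReal.ofReal ((quantileFn ν u) ^ 2) + ENNReal.ofReal ((quantileFn ν' u) ^ 2) := by
    intro u
    rw [← ENNReal.ofReal_add (sq_nonneg _) (sq_nonneg _)]
    apply ENNReal.ofReal_le_ofReal
    nlinarith [sq_nonneg (quantileFn ν u + quantileFn ν' u),
      sq_nonneg (quantileFn ν u - quantileFn ν' u)]
  refine lt_of_le_of_lt (lintegral_mono hb) ?_
  rw [lintegral_add_left' (((aemeasurable_quantile_restrict ν).pow_const 2).ennreal_ofReal)]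
  rw [sq_quantile_lintegral hna, sq_quantile_lintegral hna']
  refine ENNReal.add_lt_top.2 ⟨?_, ?_⟩
  · exact (hasFiniteIntegral_iff_ofReal (ae_of_all _ fun t => sq_nonneg t)).1
      hmom.hasFiniteIntegral
  · exact (hasFiniteIntegral_iff_ofReal (ae_of_all _ fun t => sq_nonneg t)).1
      hmom'.hasFiniteIntegral

end Quant2

theorem stmt_15 {p : ℕ} (μ₁ μ₂ : Measure (Fin p → ℝ))
    [IsProbabilityMeasure μ₁] [IsProbabilityMeasure μ₂]
    (μp μm : Measure (Fin p → ℝ))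
    (hp : μp = (μ₁.toSignedMeasure - μ₂.toSignedMeasure).toJordanDecomposition.posPart)
    (hm : μm = (μ₁.toSignedMeasure - μ₂.toSignedMeasure).toJordanDecomposition.negPart)
    (Ap Am : Set (Fin p → ℝ)) (hApm : MeasurableSet Ap) (hAmm : MeasurableSet Am)
    (hdisj : Disjoint Ap Am) (hAp : μp Apᶜ = 0) (hAm : μm Amᶜ = 0)
    (fstar : (Fin p → ℝ) → ℝ) (hfs : Measurable fstar)
    (hnap : ∀ t : ℝ, μp.map fstar {t} = 0) (hnam : ∀ t : ℝ, μm.map fstar {t} = 0)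
    (hmomp : Integrable (fun t : ℝ => t ^ 2) (normPush μp fstar))
    (hmomm : Integrable (fun t : ℝ => t ^ 2) (normPush μm fstar)) :
    ∫ x, (fstar x - fQstar μp μm Ap Am fstar x) ^ 2 ∂μ₁ =
      ∫ x, (fstar x - fQstar μp μm Ap Am fstar x) ^ 2 ∂μ₂ := by
  classical
  haveI hfinp : IsFiniteMeasure μp := by rw [hp]; infer_instance
  haveI hfinm : IsFiniteMeasure μm := by rw [hm]; infer_instance
  set s : SignedMeasure (Fin p → ℝ) := μ₁.toSignedMeasure - μ₂.toSignedMeasure with hs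
  have happly : ∀ A : Set (Fin p → ℝ), MeasurableSet A →
      (μ₁ A).toReal - (μ₂ A).toReal = (μp A).toReal - (μm A).toReal := by
    intro A hA
    have h1 : s A = (μ₁ A).toReal - (μ₂ A).toReal := by
      rw [hs, VectorMeasure.sub_apply, Measure.toSignedMeasure_apply_measurable hA,
        Measure.toSignedMeasure_apply_measurable hA]
      rfl
    have h2 : s A = (μp A).toReal - (μm A).toReal := by
      conv_lhs => rw [← s.toSignedMeasure_toJordanDecomposition]
      rw [JordanDecomposition.toSignedMeasure, VectorMeasure.sub_apply,
        Measure.toSignedMeasure_apply_measurable hA,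
        Measure.toSignedMeasure_apply_measurable hA, ← hp, ← hm]
      rfl
    rw [← h1, h2]
  have key : μ₁ + μm = μ₂ + μp := by
    ext A hA
    have h := happly A hA
    have e1 : (μ₁ A).toReal + (μm A).toReal = (μ₂ A).toReal + (μp A).toReal := by linarith
    have e2 : ((μ₁ + μm) A).toReal = ((μ₂ + μp) A).toReal := by
      rw [Measure.add_apply, Measure.add_apply,
        ENNReal.toReal_add (measure_ne_top _ _) (measure_ne_top _ _),
        ENNReal.toReal_add (measure_ne_top _ _) (measure_ne_top _ _)]
      exact e1
    exact (ENNReal.toReal_eq_toReal_iff' (measure_ne_top _ _) (measure_ne_top _ _)).1 e2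
  have hmass : μp Set.univ = μm Set.univ := by
    have h := happly Set.univ MeasurableSet.univ
    simp only [measure_univ, ENNReal.toReal_one, sub_self] at h
    exact (ENNReal.toReal_eq_toReal_iff' (measure_ne_top _ _) (measure_ne_top _ _)).1 (by linarith)
  set c := μp Set.univ with hc
  by_cases hc0 : c = 0
  · have hzp : μp = 0 := Measure.measure_univ_eq_zero.1 hc0
    have hzm : μm = 0 := Measure.measure_univ_eq_zero.1 (by rw [← hmass]; exact hc0)
    have h12 : μ₁ = μ₂ := by simpa [hzp, hzm] using key
    rw [h12]
  · have hcne : c ≠ ⊤ := measure_ne_top μp _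
    set νp := normPush μp fstar with hνp
    set νm := normPush μm fstar with hνm
    have hprob : ∀ (μ : Measure (Fin p → ℝ)), μ Set.univ = c →
        IsProbabilityMeasure (normPush μ fstar) := by
      intro μ hμ
      constructor
      rw [normPush, Measure.map_apply hfs MeasurableSet.univ, Set.preimage_univ,
        Measure.smul_apply, smul_eq_mul, hμ]
      exact ENNReal.inv_mul_cancel hc0 hcne
    haveI hPp : IsProbabilityMeasure νp := hνp ▸ hprob μp hc.symm
    haveI hPm : IsProbabilityMeasure νm := hνm ▸ hprob μm (hmass.symm.trans hc.symm)
    have hmapp : μp.map fstar = c • νp := by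
      rw [hνp, normPush, Measure.map_smul, smul_smul, ← hc,
        ENNReal.mul_inv_cancel hc0 hcne, one_smul]
    have hmapm : μm.map fstar = c • νm := by
      rw [hνm, normPush, Measure.map_smul, smul_smul, ← hmass,
        ENNReal.mul_inv_cancel hc0 hcne, one_smul]
    have hsingp : ∀ t : ℝ, νp {t} = 0 := by
      intro t
      rw [hνp, normPush, Measure.map_smul, Measure.smul_apply, hnap t, smul_eq_mul, mul_zero]
    have hsingm : ∀ t : ℝ, νm {t} = 0 := by
      intro t
      rw [hνm, normPush, Measure.map_smul, Measure.smul_apply, hnam t, smul_eq_mul, mul_zero]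
    -- measurability of the predictor
    have hQpp : Measurable fun t => quantileFn νp (cdfR νp t) :=
      Quant2.measurable_quantile_comp νp νp
    have hQpm : Measurable fun t => quantileFn νm (cdfR νp t) :=
      Quant2.measurable_quantile_comp νp νm
    have hQmp : Measurable fun t => quantileFn νp (cdfR νm t) :=
      Quant2.measurable_quantile_comp νm νp
    have hQmm : Measurable fun t => quantileFn νm (cdfR νm t) :=
      Quant2.measurable_quantile_comp νm νm
    have hfQ : Measurable (fQstar μp μm Ap Am fstar) := by
      unfold fQstar
      rw [← hνp, ← hνm]
      refine Measurable.ite hApm ?_ (Measurable.ite hAmm ?_ hfs)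
      · exact ((hQpp.comp hfs).add (hQpm.comp hfs)).div_const 2
      · exact ((hQmp.comp hfs).add (hQmm.comp hfs)).div_const 2
    have hgmeas : Measurable fun x => (fstar x - fQstar μp μm Ap Am fstar x) ^ 2 :=
      (hfs.sub hfQ).pow_const 2
    set gE : (Fin p → ℝ) → ENNReal :=
      fun x => ENNReal.ofReal ((fstar x - fQstar μp μm Ap Am fstar x) ^ 2) with hgE
    set J := ∫⁻ u in Set.Icc (0:ℝ) 1,
        ENNReal.ofReal (((quantileFn νp u - quantileFn νm u) / 2) ^ 2) ∂volume with hJ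
    -- μp side
    set Gp : ℝ → ENNReal := fun t => ENNReal.ofReal
        ((t - (quantileFn νp (cdfR νp t) + quantileFn νm (cdfR νp t)) / 2) ^ 2) with hGp
    have hGpmeas : Measurable Gp := by
      rw [hGp]
      exact ((measurable_id.sub ((hQpp.add hQpm).div_const 2)).pow_const 2).ennreal_ofReal
    have haep : ∀ᵐ x ∂μp, x ∈ Ap := by
      rw [MeasureTheory.ae_iff]
      exact hAp
    have h1p : gE =ᵐ[μp] fun x => Gp (fstar x) := by
      filter_upwards [haep] with x hx
      rw [hgE, hGp]
      simp only [fQstar, if_pos hx, ← hνp, ← hνm]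
    have hIp : ∫⁻ x, gE x ∂μp = c * J := by
      rw [lintegral_congr_ae h1p, ← lintegral_map hGpmeas hfs, hmapp,
        lintegral_smul_measure, hGp, hJ]
      rw [Quant2.key_lintegral νm hsingp, smul_eq_mul]
    -- μm side
    set Gm : ℝ → ENNReal := fun t => ENNReal.ofReal
        ((t - (quantileFn νp (cdfR νm t) + quantileFn νm (cdfR νm t)) / 2) ^ 2) with hGm
    have hGmmeas : Measurable Gm := by
      rw [hGm]
      exact ((measurable_id.sub ((hQmp.add hQmm).div_const 2)).pow_const 2).ennreal_ofReal
    have haem : ∀ᵐ x ∂μm, x ∈ Am := by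
      rw [MeasureTheory.ae_iff]
      exact hAm
    have h1m : gE =ᵐ[μm] fun x => Gm (fstar x) := by
      filter_upwards [haem] with x hx
      have hxnp : x ∉ Ap := Set.disjoint_right.1 hdisj hx
      rw [hgE, hGm]
      simp only [fQstar, if_neg hxnp, if_pos hx, ← hνp, ← hνm]
    have hGmswap : Gm = fun t => ENNReal.ofReal
        ((t - (quantileFn νm (cdfR νm t) + quantileFn νp (cdfR νm t)) / 2) ^ 2) := by
      have h2 : ∀ a b t : ℝ, (t - (a + b) / 2) ^ 2 = (t - (b + a) / 2) ^ 2 := by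
        intro a b t; ring
      funext t
      simp only [hGm]
      exact congrArg ENNReal.ofReal (h2 _ _ _)
    have hJswap : (∫⁻ u in Set.Icc (0:ℝ) 1,
        ENNReal.ofReal (((quantileFn νm u - quantileFn νp u) / 2) ^ 2) ∂volume) = J := by
      have h2 : ∀ a b : ℝ, ((a - b) / 2) ^ 2 = ((b - a) / 2) ^ 2 := by intro a b; ring
      rw [hJ]
      exact lintegral_congr fun u => congrArg ENNReal.ofReal (h2 _ _)
    have hIm : ∫⁻ x, gE x ∂μm = c * J := by
      rw [lintegral_congr_ae h1m, ← lintegral_map hGmmeas hfs, hmapm,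
        lintegral_smul_measure, hGmswap]
      rw [Quant2.key_lintegral νp hsingm, hJswap, smul_eq_mul]
    -- finiteness
    have hJfin : J ≠ ⊤ := by
      rw [hJ]
      exact (Quant2.key_fin νm hsingp hsingm hmomp hmomm).ne
    have hcJ : c * J ≠ ⊤ := ENNReal.mul_ne_top hcne hJfin
    -- combine
    have hL : ∫⁻ x, gE x ∂μ₁ + ∫⁻ x, gE x ∂μm = ∫⁻ x, gE x ∂μ₂ + ∫⁻ x, gE x ∂μp := by
      rw [← lintegral_add_measure, ← lintegral_add_measure, key]
    rw [hIp, hIm, add_comm _ (c * J), add_comm _ (c * J)] at hL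
    have hL2 : ∫⁻ x, gE x ∂μ₁ = ∫⁻ x, gE x ∂μ₂ := (ENNReal.add_right_inj hcJ).1 hL
    rw [integral_eq_lintegral_of_nonneg_ae (ae_of_all _ fun x => sq_nonneg _)
        hgmeas.aestronglyMeasurable,
      integral_eq_lintegral_of_nonneg_ae (ae_of_all _ fun x => sq_nonneg _)
        hgmeas.aestronglyMeasurable]
    rw [hgE] at hL2
    rw [hL2]
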